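/- For every integer k ≥ 3, 1 + L_{k−3} ≤ L_k; equivalently, the expected number of departures C_k = 1 + L_{k−3} from a fully occupied circle of k nodes is at most the expected number L_k of departures from a fully occupied line of k nodes. -/

import Mathlib

/-!
`Lseg (n + 1) - Lseg n = LsegDiff (n + 1)` is a partial sum of the alternating series
`Σ (−1)^{k+1} 2^{k−1}/k! = (1 − e⁻²)/2 ≈ 0.43`, so `Lseg k − Lseg (k − 3)` is a sum of three
consecutive partial sums. The terms `2^{k−1}/k!` decrease, so the alternating tail after the
fourth partial sum `1/3` is nonnegative and every partial sum from the third on is at least `1/3`;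
for `k = 3, 4` the three sums are computed.
-/

/-- `Lseg n = Σ_{k=1}^{n} (−1)^{k+1} (2^{k−1}/k!) (n−k+1)`, the expected number of
transmissions in one slot from a fully occupied segment of `n` nodes (so `Lseg 0 = 0`). -/
noncomputable def Lseg (n : ℕ) : ℝ :=
  ∑ k ∈ Finset.Icc 1 n,
    (-1 : ℝ) ^ (k + 1) * (2 ^ (k - 1) / (Nat.factorial k : ℝ)) * ((n : ℝ) - (k : ℝ) + 1)

open Finset Nat

theorem sum_range_neg_one_pow_mul_nonneg {R : Type*} [Ring R] [PartialOrder R] [IsOrderedRing R]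
    {f : ℕ → R} (hf : Antitone f) (hf0 : ∀ i, 0 ≤ f i) (n : ℕ) :
    0 ≤ ∑ i ∈ range n, (-1) ^ i * f i := by
  induction n using Nat.strong_induction_on generalizing f with
  | _ n ih =>
    match n with
    | 0 => simp
    | 1 => simpa using hf0 0
    | n + 2 =>
      have hpair : 0 ≤ f 0 - f 1 := sub_nonneg.2 (hf zero_le_one)
      have htail := ih n (by omega) (f := fun i ↦ f (i + 1 + 1))
        (hf.comp_monotone fun _ _ h ↦ by omega) (fun i ↦ hf0 _)
      rw [sum_range_succ', sum_range_succ']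
      simp only [pow_succ, mul_neg_one, neg_neg, pow_zero, one_mul, neg_mul, zero_add] at htail ⊢
      rw [add_assoc, neg_add_eq_sub]
      exact add_nonneg htail hpair

theorem antitone_pow_div_factorial_succ {x : ℝ} (hx0 : 0 ≤ x) (hx2 : x ≤ 2) :
    Antitone fun i : ℕ ↦ x ^ i / (i + 1)! := by
  refine antitone_nat_of_succ_le fun i ↦ ?_
  have hratio : x ^ (i + 1) / (i + 1 + 1)! = x ^ i / (i + 1)! * (x / (i + 2)) := by
    rw [factorial_succ (i + 1)]; push_cast; field_simp; ring
  rw [hratio]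
  refine mul_le_of_le_one_right (by positivity) ?_
  rw [div_le_one (by positivity)]
  linarith [(i.cast_nonneg : (0 : ℝ) ≤ i)]

noncomputable def LsegDiff (n : ℕ) : ℝ := ∑ i ∈ range n, (-1) ^ i * ((2 : ℝ) ^ i / (i + 1)!)

theorem Lseg_eq_sum_range (n : ℕ) :
    Lseg n = ∑ i ∈ range n, (-1) ^ i * ((2 : ℝ) ^ i / (i + 1)!) * (n - i) := by
  rw [Lseg, ← Ico_add_one_right_eq_Icc, sum_Ico_eq_sum_range, add_tsub_cancel_right]
  refine sum_congr rfl fun i _ ↦ ?_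
  simp only [add_comm 1 i, add_tsub_cancel_right, pow_succ]
  push_cast
  ring

theorem Lseg_succ (n : ℕ) : Lseg (n + 1) = Lseg n + LsegDiff (n + 1) := by
  rw [Lseg_eq_sum_range, Lseg_eq_sum_range, LsegDiff, sum_range_succ, sum_range_succ,
    ← add_assoc, ← sum_add_distrib]
  push_cast
  congr 1
  · exact sum_congr rfl fun i _ ↦ by ring
  · ring

theorem LsegDiff_three : LsegDiff 3 = 2 / 3 := by norm_num [LsegDiff, sum_range_succ, factorial]

theorem LsegDiff_four : LsegDiff 4 = 1 / 3 := by norm_num [LsegDiff, sum_range_succ, factorial]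

theorem LsegDiff_four_le (m : ℕ) : LsegDiff 4 ≤ LsegDiff (4 + m) := by
  have hsign (i : ℕ) : (-1 : ℝ) ^ (4 + i) = (-1) ^ i := by rw [pow_add]; norm_num
  rw [LsegDiff, LsegDiff, sum_range_add, le_add_iff_nonneg_right]
  simp only [hsign]
  refine sum_range_neg_one_pow_mul_nonneg (f := fun i ↦ (2 : ℝ) ^ (4 + i) / (4 + i + 1)!)
    ((antitone_pow_div_factorial_succ zero_le_two le_rfl).comp_monotone fun _ _ h ↦ by omega)
    (fun i ↦ ?_) m
  positivity

theorem one_third_le_LsegDiff {n : ℕ} (hn : 3 ≤ n) : 1 / 3 ≤ LsegDiff n := by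
  obtain rfl | hn := hn.eq_or_lt
  · norm_num [LsegDiff_three]
  · obtain ⟨m, rfl⟩ := Nat.exists_eq_add_of_le hn
    exact LsegDiff_four ▸ LsegDiff_four_le m

theorem one_le_LsegDiff_add_LsegDiff_add_LsegDiff (n : ℕ) :
    1 ≤ LsegDiff (n + 1) + LsegDiff (n + 2) + LsegDiff (n + 3) := by
  match n with
  | 0 => norm_num [LsegDiff, sum_range_succ, factorial]
  | 1 => norm_num [LsegDiff, sum_range_succ, factorial]
  | n + 2 =>
    linarith [one_third_le_LsegDiff (n := n + 2 + 1) (by omega),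
      one_third_le_LsegDiff (n := n + 2 + 2) (by omega),
      one_third_le_LsegDiff (n := n + 2 + 3) (by omega)]

theorem circle_le_line (k : ℕ) (hk : 3 ≤ k) : 1 + Lseg (k - 3) ≤ Lseg k := by
  obtain ⟨n, rfl⟩ := Nat.exists_eq_add_of_le' hk
  rw [Nat.add_sub_cancel, Lseg_succ, Lseg_succ, Lseg_succ]
  linarith [one_le_LsegDiff_add_LsegDiff_add_LsegDiff n]
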